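/- Let all variables be discrete and suppose: (i) ê(x) := p̂(A=a|x) equals the true p(a|x) for all x, and (ii) q̂_a satisfies the true bridge equation Σ_z q̂_a(z,a',x)·p(z | w, a', x) = p(w|a,x)/p(w|a',x) for all w,a',x. Then for an arbitrary function ĥ(w,a',x) and arbitrary p̂(w|a,x) (used to define η̂₁(x,a',a) := Σ_w ĥ(w,a',x)·p̂(w|a,x)), the quantity E[ I(A=a')/p(A=a'|X)·q̂_a(Z,A,X)·(Y − ĥ(W,A,X)) + I(A=a)/p(A=a|X)·(ĥ(W,a',X) − η̂₁(X,a',a)) + η̂₁(X,a',a) ] equals E[ I(A=a')/p(A=a'|X)·Y·q̂_a(Z,A,X) ]. -/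
import Mathlib


open Finset
open scoped Classical

noncomputable section

/-- Probability of an event under weights `mu`. -/
def pr {O : Type} [Fintype O] (mu : O -> Real) (s : O -> Prop) : Real :=
  Finset.univ.sum (fun w => if s w then mu w else 0)

/-- Conditional probability `P(s | t)`. -/
def cpr {O : Type} [Fintype O] (mu : O -> Real) (s t : O -> Prop) : Real :=
  pr mu (fun w => s w /\ t w) / pr mu t

/-- Expectation of `f`. -/
def expec {O : Type} [Fintype O] (mu : O -> Real) (f : O -> Real) : Real :=
  Finset.univ.sum (fun w => f w * mu w)

/-- Conditional expectation `E[f | t]`. -/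
def cexp {O : Type} [Fintype O] (mu : O -> Real) (f : O -> Real) (t : O -> Prop) : Real :=
  (Finset.univ.sum (fun w => if t w then f w * mu w else 0)) / pr mu t

section aux
variable {O : Type} [Fintype O]

lemma pr_nonneg (mu : O → ℝ) (hmu0 : ∀ o, 0 ≤ mu o) (s : O → Prop) : 0 ≤ pr mu s := by
  apply Finset.sum_nonneg
  intro o _
  by_cases h : s o <;> simp [h, hmu0 o]

lemma pr_congr (mu : O → ℝ) {s t : O → Prop} (h : ∀ o, s o ↔ t o) : pr mu s = pr mu t := by
  have : s = t := funext fun o => propext (h o)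
  rw [this]

lemma pr_zero (mu : O → ℝ) {s : O → Prop} (h : ∀ o, s o → mu o = 0) : pr mu s = 0 := by
  apply Finset.sum_eq_zero
  intro o _
  by_cases hs : s o <;> simp [hs, h o]

lemma mu_eq_zero (mu : O → ℝ) (hmu0 : ∀ o, 0 ≤ mu o) {s : O → Prop}
    (h : pr mu s = 0) {o : O} (ho : s o) : mu o = 0 := by
  have h2 := (Finset.sum_eq_zero_iff_of_nonneg
    (fun o _ => by by_cases hs : s o <;> simp [hs, hmu0 o] : ∀ i ∈ Finset.univ, 0 ≤ if s i then mu i else 0)).mp h o (Finset.mem_univ o)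
  simpa [ho] using h2

lemma expec_fiber {α : Type} [Fintype α] [DecidableEq α] (mu : O → ℝ)
    (g : O → α) (F : α → ℝ) :
    expec mu (fun o => F (g o)) = Finset.univ.sum (fun t => F t * pr mu (fun o => g o = t)) := by
  simp only [expec, pr, Finset.mul_sum]
  rw [Finset.sum_comm]
  apply Finset.sum_congr rfl
  intro o _
  simp [mul_ite, mul_zero, Finset.sum_ite_eq]

end aux

lemma key1 {O TA TX : Type} [Fintype O] [Fintype TA] [Fintype TX]
    [DecidableEq TA] [DecidableEq TX]
    (mu : O → ℝ) (hmu0 : ∀ o, 0 ≤ mu o)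
    (A : O → TA) (X : O → TX) (a : TA)
    (hpa : ∀ x, 0 < pr mu (fun o => X o = x) → 0 < pr mu (fun o => A o = a ∧ X o = x))
    (c : TX → ℝ) :
    expec mu (fun o => (if A o = a then (1:ℝ) else 0) /
        cpr mu (fun o' => A o' = a) (fun o' => X o' = X o) * c (X o))
      = expec mu (fun o => c (X o)) := by
  have e1 : expec mu (fun o => (if A o = a then (1:ℝ) else 0) /
      cpr mu (fun o' => A o' = a) (fun o' => X o' = X o) * c (X o))
      = Finset.univ.sum (fun t : TX × TA =>
          ((if t.2 = a then (1:ℝ) else 0) /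
            cpr mu (fun o' => A o' = a) (fun o' => X o' = t.1) * c t.1) *
          pr mu (fun o => (X o, A o) = t)) :=
    expec_fiber mu (fun o => (X o, A o))
      (fun t => (if t.2 = a then (1:ℝ) else 0) /
        cpr mu (fun o' => A o' = a) (fun o' => X o' = t.1) * c t.1)
  have e2 : expec mu (fun o => c (X o))
      = Finset.univ.sum (fun x : TX => c x * pr mu (fun o => X o = x)) :=
    expec_fiber mu X c
  rw [e1, e2, Fintype.sum_prod_type]
  apply Finset.sum_congr rfl
  intro x _
  rw [Finset.sum_eq_single a]
  · have hpr : pr mu (fun o => (X o, A o) = (x, a)) = pr mu (fun o => A o = a ∧ X o = x) :=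
      pr_congr mu (by intro o; simp only [Prod.mk.injEq]; tauto)
    rw [hpr]
    simp only [if_pos rfl, cpr]
    set P1 := pr mu (fun o => X o = x) with hP1def
    set Pa := pr mu (fun o => A o = a ∧ X o = x) with hPadef
    rcases (pr_nonneg mu hmu0 (fun o => X o = x)).eq_or_lt with h0 | h0
    · have hP10 : P1 = 0 := h0.symm
      have hPa0 : Pa = 0 := by
        apply pr_zero
        intro o ho
        exact mu_eq_zero mu hmu0 h0.symm ho.2
      simp [hPa0, hP10]
    · have hPa0 : 0 < Pa := hpa x h0
      have hP1 : P1 ≠ 0 := ne_of_gt h0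
      have hPa : Pa ≠ 0 := ne_of_gt hPa0
      rw [if_pos trivial]
      field_simp
  · intro s _ hs
    simp [hs]
  · intro h
    simp at h

lemma key2 {O TA TZ TW TX : Type} [Fintype O] [Fintype TA] [Fintype TZ] [Fintype TW] [Fintype TX]
    [DecidableEq TA] [DecidableEq TZ] [DecidableEq TW] [DecidableEq TX]
    (mu : O → ℝ) (hmu0 : ∀ o, 0 ≤ mu o)
    (A : O → TA) (Z : O → TZ) (W : O → TW) (X : O → TX)
    (a a' : TA) (q : TZ → TA → TX → ℝ) (hhat : TW → TA → TX → ℝ)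
    (hq : ∀ (v : TW) (t : TA) (x : TX),
      Finset.univ.sum (fun z : TZ =>
        q z t x * cpr mu (fun o => Z o = z) (fun o => W o = v ∧ A o = t ∧ X o = x)) =
      cpr mu (fun o => W o = v) (fun o => A o = a ∧ X o = x) /
        cpr mu (fun o => W o = v) (fun o => A o = t ∧ X o = x))
    (hpa : ∀ x, 0 < pr mu (fun o => X o = x) → 0 < pr mu (fun o => A o = a ∧ X o = x))
    (hpa' : ∀ x, 0 < pr mu (fun o => X o = x) → 0 < pr mu (fun o => A o = a' ∧ X o = x))
    (hpw : ∀ (v : TW) (x : TX), 0 < pr mu (fun o => X o = x) →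
      0 < pr mu (fun o => W o = v ∧ A o = a' ∧ X o = x)) :
    expec mu (fun o => (if A o = a' then (1:ℝ) else 0) /
        cpr mu (fun o' => A o' = a') (fun o' => X o' = X o) *
        q (Z o) (A o) (X o) * hhat (W o) (A o) (X o))
      = expec mu (fun o => (if A o = a then (1:ℝ) else 0) /
        cpr mu (fun o' => A o' = a) (fun o' => X o' = X o) * hhat (W o) a' (X o)) := by
  have e1 : expec mu (fun o => (if A o = a' then (1:ℝ) else 0) /
      cpr mu (fun o' => A o' = a') (fun o' => X o' = X o) *
      q (Z o) (A o) (X o) * hhat (W o) (A o) (X o))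
      = Finset.univ.sum (fun t : TX × TW × TZ × TA =>
          ((if t.2.2.2 = a' then (1:ℝ) else 0) /
            cpr mu (fun o' => A o' = a') (fun o' => X o' = t.1) *
            q t.2.2.1 t.2.2.2 t.1 * hhat t.2.1 t.2.2.2 t.1) *
          pr mu (fun o => (X o, W o, Z o, A o) = t)) :=
    expec_fiber mu (fun o => (X o, W o, Z o, A o))
      (fun t => (if t.2.2.2 = a' then (1:ℝ) else 0) /
        cpr mu (fun o' => A o' = a') (fun o' => X o' = t.1) *
        q t.2.2.1 t.2.2.2 t.1 * hhat t.2.1 t.2.2.2 t.1)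
  have e2 : expec mu (fun o => (if A o = a then (1:ℝ) else 0) /
      cpr mu (fun o' => A o' = a) (fun o' => X o' = X o) * hhat (W o) a' (X o))
      = Finset.univ.sum (fun t : TX × TW × TA =>
          ((if t.2.2 = a then (1:ℝ) else 0) /
            cpr mu (fun o' => A o' = a) (fun o' => X o' = t.1) * hhat t.2.1 a' t.1) *
          pr mu (fun o => (X o, W o, A o) = t)) :=
    expec_fiber mu (fun o => (X o, W o, A o))
      (fun t => (if t.2.2 = a then (1:ℝ) else 0) /
        cpr mu (fun o' => A o' = a) (fun o' => X o' = t.1) * hhat t.2.1 a' t.1)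
  rw [e1, e2]
  simp only [Fintype.sum_prod_type]
  apply Finset.sum_congr rfl
  intro x _
  rcases (pr_nonneg mu hmu0 (fun o => X o = x)).eq_or_lt with h0 | h0
  · -- pr(X = x) = 0 : both sides vanish
    have hz : ∀ (s : O → Prop), (∀ o, s o → X o = x) → pr mu s = 0 := by
      intro s hs
      apply pr_zero
      intro o ho
      exact mu_eq_zero mu hmu0 (s := fun o => X o = x) h0.symm (hs o ho)
    rw [Finset.sum_eq_zero, Finset.sum_eq_zero]
    · intro v _
      rw [Finset.sum_eq_zero]
      intro s _
      rw [hz _ (fun o ho => congrArg (fun p => p.1) ho)]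
      exact mul_zero _
    · intro v _
      apply Finset.sum_eq_zero
      intro z _
      apply Finset.sum_eq_zero
      intro s _
      rw [hz _ (fun o ho => congrArg (fun p => p.1) ho)]
      exact mul_zero _
  · -- pr(X = x) > 0
    apply Finset.sum_congr rfl
    intro v _
    -- positivity facts
    have hP1 : pr mu (fun o => X o = x) ≠ 0 := ne_of_gt h0
    have hPa : pr mu (fun o => A o = a ∧ X o = x) ≠ 0 := ne_of_gt (hpa x h0)
    have hPa' : pr mu (fun o => A o = a' ∧ X o = x) ≠ 0 := ne_of_gt (hpa' x h0)
    have hPw : pr mu (fun o => W o = v ∧ A o = a' ∧ X o = x) ≠ 0 := ne_of_gt (hpw v x h0)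
    -- reduce the inner sums over the treatment coordinate
    have hL : ∀ z : TZ, Finset.univ.sum (fun s : TA =>
        ((if s = a' then (1:ℝ) else 0) /
          cpr mu (fun o' => A o' = a') (fun o' => X o' = x) * q z s x * hhat v s x) *
        pr mu (fun o => (X o, W o, Z o, A o) = (x, v, z, s)))
        = (hhat v a' x / cpr mu (fun o' => A o' = a') (fun o' => X o' = x)) *
          (q z a' x * pr mu (fun o => Z o = z ∧ W o = v ∧ A o = a' ∧ X o = x)) := by
      intro z
      rw [Finset.sum_eq_single a']
      · rw [pr_congr mu (t := fun o => Z o = z ∧ W o = v ∧ A o = a' ∧ X o = x)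
          (by intro o; simp only [Prod.mk.injEq]; tauto)]
        rw [if_pos rfl]
        ring
      · intro s _ hs
        simp [hs]
      · intro h
        simp at h
    have hR : Finset.univ.sum (fun s : TA =>
        ((if s = a then (1:ℝ) else 0) /
          cpr mu (fun o' => A o' = a) (fun o' => X o' = x) * hhat v a' x) *
        pr mu (fun o => (X o, W o, A o) = (x, v, s)))
        = (hhat v a' x / cpr mu (fun o' => A o' = a) (fun o' => X o' = x)) *
          pr mu (fun o => W o = v ∧ A o = a ∧ X o = x) := by
      rw [Finset.sum_eq_single a]
      · rw [pr_congr mu (t := fun o => W o = v ∧ A o = a ∧ X o = x)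
          (by intro o; simp only [Prod.mk.injEq]; tauto)]
        rw [if_pos rfl]
        ring
      · intro s _ hs
        simp [hs]
      · intro h
        simp at h
    rw [hR, Finset.sum_congr rfl (fun z _ => hL z), ← Finset.mul_sum]
    -- use the bridge equation
    have hq' := hq v a' x
    simp only [cpr] at hq' ⊢
    simp only [← mul_div_assoc] at hq'
    rw [← Finset.sum_div, div_eq_iff hPw] at hq'
    rw [hq']
    field_simp

theorem stmt10
    {O TA TM TZ TW TX : Type}
    [Fintype O] [Fintype TA] [Fintype TM] [Fintype TZ] [Fintype TW] [Fintype TX]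
    [DecidableEq TA] [DecidableEq TM] [DecidableEq TZ] [DecidableEq TW] [DecidableEq TX]
    (mu : O -> Real) (hmu0 : forall o : O, 0 <= mu o)
    (hmu1 : Finset.univ.sum mu = 1)
    (A : O -> TA) (Y : O -> Real) (M : O -> TM) (Z : O -> TZ) (W : O -> TW) (X : O -> TX)
    (a a' : TA) (q : TZ -> TA -> TX -> Real)
    (ehat : TX -> Real)
    (hehat : forall x : TX, ehat x = cpr mu (fun o => A o = a) (fun o => X o = x))
    (hq : forall (v : TW) (t : TA) (x : TX),
      Finset.univ.sum (fun z : TZ =>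
        q z t x * cpr mu (fun o => Z o = z) (fun o => W o = v /\ A o = t /\ X o = x)) =
      cpr mu (fun o => W o = v) (fun o => A o = a /\ X o = x) /
        cpr mu (fun o => W o = v) (fun o => A o = t /\ X o = x))
    (hhat : TW -> TA -> TX -> Real) (pwhat : TW -> TX -> Real)
    (hpa : forall x : TX, 0 < pr mu (fun o => X o = x) ->
      0 < pr mu (fun o => A o = a /\ X o = x))
    (hpa' : forall x : TX, 0 < pr mu (fun o => X o = x) ->
      0 < pr mu (fun o => A o = a' /\ X o = x))
    (hpw : forall (v : TW) (x : TX), 0 < pr mu (fun o => X o = x) ->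
      0 < pr mu (fun o => W o = v /\ A o = a' /\ X o = x)) :
    expec mu (fun o =>
      (if A o = a' then (1 : Real) else 0) /
          cpr mu (fun o' => A o' = a') (fun o' => X o' = X o) *
        q (Z o) (A o) (X o) * (Y o - hhat (W o) (A o) (X o)) +
      (if A o = a then (1 : Real) else 0) / ehat (X o) *
        (hhat (W o) a' (X o) -
          Finset.univ.sum (fun v : TW => hhat v a' (X o) * pwhat v (X o))) +
      Finset.univ.sum (fun v : TW => hhat v a' (X o) * pwhat v (X o))) =
    expec mu (fun o =>
      (if A o = a' then (1 : Real) else 0) /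
          cpr mu (fun o' => A o' = a') (fun o' => X o' = X o) *
        Y o * q (Z o) (A o) (X o)) := by
  simp only [hehat]
  have h1 := key1 mu hmu0 A X a hpa
    (fun x => Finset.univ.sum (fun v : TW => hhat v a' x * pwhat v x))
  have h2 := key2 mu hmu0 A Z W X a a' q hhat hq hpa hpa' hpw
  have h0 := key1 mu hmu0 A X a hpa (fun _ => (1:ℝ))
  have expand : expec mu (fun o =>
      (if A o = a' then (1 : Real) else 0) /
          cpr mu (fun o' => A o' = a') (fun o' => X o' = X o) *
        q (Z o) (A o) (X o) * (Y o - hhat (W o) (A o) (X o)) +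
      (if A o = a then (1 : Real) else 0) /
          cpr mu (fun o'' => A o'' = a) (fun o' => X o' = X o) *
        (hhat (W o) a' (X o) -
          Finset.univ.sum (fun v : TW => hhat v a' (X o) * pwhat v (X o))) +
      Finset.univ.sum (fun v : TW => hhat v a' (X o) * pwhat v (X o)))
      = expec mu (fun o =>
          (if A o = a' then (1 : Real) else 0) /
            cpr mu (fun o' => A o' = a') (fun o' => X o' = X o) *
            Y o * q (Z o) (A o) (X o))
        + (expec mu (fun o => (if A o = a then (1:ℝ) else 0) /
            cpr mu (fun o' => A o' = a) (fun o' => X o' = X o) * hhat (W o) a' (X o))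
          - expec mu (fun o => (if A o = a' then (1:ℝ) else 0) /
            cpr mu (fun o' => A o' = a') (fun o' => X o' = X o) *
            q (Z o) (A o) (X o) * hhat (W o) (A o) (X o)))
        + (expec mu (fun o =>
            Finset.univ.sum (fun v : TW => hhat v a' (X o) * pwhat v (X o)))
          - expec mu (fun o => (if A o = a then (1:ℝ) else 0) /
            cpr mu (fun o' => A o' = a) (fun o' => X o' = X o) *
            Finset.univ.sum (fun v : TW => hhat v a' (X o) * pwhat v (X o)))) := by
    simp only [expec]
    rw [← Finset.sum_sub_distrib, ← Finset.sum_sub_distrib, ← Finset.sum_add_distrib,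
      ← Finset.sum_add_distrib]
    apply Finset.sum_congr rfl
    intro o _
    ring
  rw [expand, h1, h2]
  ring
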